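/- ◊ (diamond on ω₁) implies that there exists a bistationary set S ⊆ ω₁ such that ◊_S holds. -/

import Mathlib

noncomputable section

/-- The first uncountable ordinal. -/
def omega1 : Ordinal := (Cardinal.aleph 1).ord

/-- `C` is closed below `omega1`: it contains all its limit points below `omega1`. -/
def IsClosedIn (C : Set Ordinal) : Prop :=
  ∀ a, a < omega1 → (C ∩ Set.Iio a).Nonempty → sSup (C ∩ Set.Iio a) = a → a ∈ C

/-- `C` is unbounded (cofinal) in `omega1`. -/
def IsUnboundedIn (C : Set Ordinal) : Prop :=
  ∀ a, a < omega1 → ∃ b ∈ C, a < b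

/-- A club subset of `omega1`: closed and unbounded. -/
def IsClub' (C : Set Ordinal) : Prop :=
  C ⊆ Set.Iio omega1 ∧ IsClosedIn C ∧ IsUnboundedIn C

/-- A stationary subset of `omega1`: meets every club. -/
def IsStationary' (S : Set Ordinal) : Prop :=
  S ⊆ Set.Iio omega1 ∧ ∀ C, IsClub' C → (S ∩ C).Nonempty

/-- `◊_S`: a diamond sequence on `S`. -/
def DiamondOn (S : Set Ordinal) : Prop :=
  ∃ A : Ordinal → Set Ordinal, (∀ α ∈ S, A α ⊆ Set.Iio α) ∧
    ∀ X : Set Ordinal, IsStationary' {α | α ∈ S ∧ X ∩ Set.Iio α = A α}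

/- ### Auxiliary lemmas -/

universe u v

lemma lift_omega1 : Ordinal.lift.{v, u} omega1 = omega1 := by
  rw [omega1, omega1, Cardinal.lift_ord, Cardinal.lift_aleph, Ordinal.lift_one]

lemma lift_lt_omega1 {a : Ordinal.{u}} :
    Ordinal.lift.{v, u} a < omega1 ↔ a < omega1 := by
  rw [← lift_omega1.{u, v}, Ordinal.lift_lt]

lemma lift_down_omega1 {a : Ordinal.{max u v}} (h : a < omega1) :
    ∃ b : Ordinal.{u}, Ordinal.lift.{v, u} b = a := by
  refine Ordinal.mem_range_lift_of_le (a := omega1) ?_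
  rw [lift_omega1]
  exact h.le

lemma lift_sSup (s : Set Ordinal.{u}) (hne : s.Nonempty) (hbdd : BddAbove s) :
    Ordinal.lift.{v, u} (sSup s) = sSup (Ordinal.lift.{v, u} '' s) := by
  have hbdd' : BddAbove (Ordinal.lift.{v, u} '' s) := by
    obtain ⟨m, hm⟩ := hbdd
    exact ⟨Ordinal.lift.{v, u} m, by rintro x ⟨y, hy, rfl⟩; exact Ordinal.lift_le.2 (hm hy)⟩
  have hge : sSup (Ordinal.lift.{v, u} '' s) ≤ Ordinal.lift.{v, u} (sSup s) := by
    apply csSup_le (hne.image _)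
    rintro x ⟨y, hy, rfl⟩
    exact Ordinal.lift_le.2 (le_csSup hbdd hy)
  refine le_antisymm ?_ hge
  obtain ⟨t, ht⟩ := Ordinal.mem_range_lift_of_le hge
  rw [← ht]
  apply Ordinal.lift_le.2
  apply csSup_le hne
  intro x hx
  have : Ordinal.lift.{v, u} x ≤ Ordinal.lift.{v, u} t := ht ▸ le_csSup hbdd' ⟨x, hx, rfl⟩
  exact Ordinal.lift_le.1 this


lemma ord_lt_add_one (a : Ordinal.{u}) : a < a + 1 := by
  rw [Ordinal.add_one_eq_succ]; exact Order.lt_succ a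

lemma ord_add_one_ne_zero (a : Ordinal.{u}) : a + 1 ≠ 0 := by
  rw [Ordinal.add_one_eq_succ]; exact Order.succ_ne_bot a

lemma ord_add_one_inj {a b : Ordinal.{u}} (h : a + 1 = b + 1) : a = b := by
  rw [Ordinal.add_one_eq_succ, Ordinal.add_one_eq_succ] at h
  exact Order.succ_injective h

lemma ord_add_one_lt_limit {a b : Ordinal.{u}} (h : Order.IsSuccLimit b) (hab : a < b) : a + 1 < b := by
  rw [Ordinal.add_one_eq_succ]; exact h.succ_lt hab

/-- The preimage under `lift` of a club is a club. -/
lemma isClub_preimage_lift (C' : Set Ordinal.{max u v}) (hC' : IsClub' C') :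
    IsClub' (Ordinal.lift.{v, u} ⁻¹' C') := by
  obtain ⟨hsub, hcl, hun⟩ := hC'
  refine ⟨fun a ha => lift_lt_omega1.{u, v}.1 (hsub ha), ?_, ?_⟩
  · intro a ha hne hsup
    set L := Ordinal.lift.{v, u}
    set s := (L ⁻¹' C') ∩ Set.Iio a with hs
    have hbdd : BddAbove s := ⟨a, fun x hx => (hx.2 : x < a).le⟩
    have himg : L '' s ⊆ C' ∩ Set.Iio (L a) := by
      rintro x ⟨y, hy, rfl⟩
      exact ⟨hy.1, Ordinal.lift_lt.2 hy.2⟩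
    have hne' : (C' ∩ Set.Iio (L a)).Nonempty := by
      obtain ⟨x, hx⟩ := hne
      exact ⟨L x, himg ⟨x, hx, rfl⟩⟩
    have hbdd' : BddAbove (C' ∩ Set.Iio (L a)) := ⟨L a, fun x hx => (hx.2 : x < L a).le⟩
    have hsup' : sSup (C' ∩ Set.Iio (L a)) = L a := by
      apply le_antisymm (csSup_le hne' (fun x hx => (hx.2 : x < L a).le))
      calc L a = L (sSup s) := by rw [hsup]
        _ = sSup (L '' s) := lift_sSup s hne hbdd
        _ ≤ sSup (C' ∩ Set.Iio (L a)) := csSup_le_csSup hbdd' (hne.image L) himg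
    exact hcl (L a) (lift_lt_omega1.{u, v}.2 ha) hne' hsup'
  · intro a ha
    obtain ⟨b', hb'C, hb'⟩ := hun (Ordinal.lift.{v, u} a) (lift_lt_omega1.{u, v}.2 ha)
    obtain ⟨b, rfl⟩ := lift_down_omega1.{u, v} (hsub hb'C)
    exact ⟨b, hb'C, Ordinal.lift_lt.1 hb'⟩

/-- The image under `lift` of a club is a club. -/
lemma isClub_image_lift (D : Set Ordinal.{u}) (hD : IsClub' D) :
    IsClub' (Ordinal.lift.{v, u} '' D) := by
  obtain ⟨hsub, hcl, hun⟩ := hD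
  set L := Ordinal.lift.{v, u}
  refine ⟨?_, ?_, ?_⟩
  · rintro x ⟨y, hy, rfl⟩
    exact lift_lt_omega1.{u, v}.2 (hsub hy)
  · intro a ha hne hsup
    obtain ⟨b, rfl⟩ := lift_down_omega1.{u, v} ha
    have hb : b < omega1 := lift_lt_omega1.{u, v}.1 ha
    have hset : (L '' D) ∩ Set.Iio (L b) = L '' (D ∩ Set.Iio b) := by
      ext x
      constructor
      · rintro ⟨⟨y, hy, rfl⟩, hx⟩
        exact ⟨y, ⟨hy, Ordinal.lift_lt.1 hx⟩, rfl⟩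
      · rintro ⟨y, ⟨hy, hyb⟩, rfl⟩
        exact ⟨⟨y, hy, rfl⟩, Ordinal.lift_lt.2 hyb⟩
    rw [hset] at hne hsup
    have hne2 : (D ∩ Set.Iio b).Nonempty := by
      obtain ⟨x, y, hy, _⟩ := hne
      exact ⟨y, hy⟩
    have hbdd2 : BddAbove (D ∩ Set.Iio b) := ⟨b, fun x hx => (hx.2 : x < b).le⟩
    have heq : Ordinal.lift.{v, u} (sSup (D ∩ Set.Iio b)) = Ordinal.lift.{v, u} b := by
      rw [lift_sSup.{u, v} _ hne2 hbdd2]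
      exact hsup
    have hsupb : sSup (D ∩ Set.Iio b) = b := Ordinal.lift_inj.1 heq
    exact ⟨b, hcl b hb hne2 hsupb, rfl⟩
  · intro a ha
    obtain ⟨b, rfl⟩ := lift_down_omega1.{u, v} ha
    obtain ⟨c, hcD, hc⟩ := hun b (lift_lt_omega1.{u, v}.1 ha)
    exact ⟨L c, ⟨c, hcD, rfl⟩, Ordinal.lift_lt.2 hc⟩

/-- Diamond transfers up along `lift`. -/
lemma diamondOn_up (hd : DiamondOn.{u} (Set.Iio omega1)) :
    DiamondOn.{max u v} (Set.Iio omega1) := by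
  obtain ⟨A, hA, hG⟩ := hd
  set L := Ordinal.lift.{v, u}
  refine ⟨fun α => {γ | ∃ b x, L b = α ∧ L x = γ ∧ x ∈ A b}, ?_, ?_⟩
  · rintro α hα γ ⟨b, x, rfl, rfl, hx⟩
    have hb : b < omega1 := lift_lt_omega1.{u, v}.1 hα
    exact Ordinal.lift_lt.2 (hA b hb hx)
  · intro X'
    refine ⟨fun α hα => hα.1, ?_⟩
    intro C' hC'
    obtain ⟨b, ⟨hb, hXb⟩, hbC⟩ := (hG (L ⁻¹' X')).2 _ (isClub_preimage_lift C' hC')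
    refine ⟨L b, ⟨lift_lt_omega1.{u, v}.2 hb, ?_⟩, hbC⟩
    ext γ
    constructor
    · rintro ⟨hγX, hγb⟩
      obtain ⟨x, rfl⟩ := Ordinal.mem_range_lift_of_le hγb.le
      have : x ∈ (L ⁻¹' X') ∩ Set.Iio b := ⟨hγX, Ordinal.lift_lt.1 hγb⟩
      rw [hXb] at this
      exact ⟨b, x, rfl, rfl, this⟩
    · rintro ⟨b₂, x, hb₂, rfl, hx⟩
      have hb₂b : b₂ = b := Ordinal.lift_inj.1 hb₂
      rw [hb₂b] at hx
      have : x ∈ (L ⁻¹' X') ∩ Set.Iio b := by rw [hXb]; exact hx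
      exact ⟨this.1, Ordinal.lift_lt.2 this.2⟩

/-- Diamond transfers down along `lift`. -/
lemma diamondOn_down (hd : DiamondOn.{max u v} (Set.Iio omega1)) :
    DiamondOn.{u} (Set.Iio omega1) := by
  obtain ⟨A', hA', hG'⟩ := hd
  set L := Ordinal.lift.{v, u}
  refine ⟨fun b => L ⁻¹' (A' (L b)), ?_, ?_⟩
  · intro b hb x hx
    have := hA' (L b) (lift_lt_omega1.{u, v}.2 hb) hx
    exact Ordinal.lift_lt.1 this
  · intro X
    refine ⟨fun α hα => hα.1, ?_⟩
    intro C hC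
    obtain ⟨α, ⟨hα, hXα⟩, hαC⟩ := (hG' (L '' X)).2 _ (isClub_image_lift C hC)
    obtain ⟨b, hbC, rfl⟩ := hαC
    refine ⟨b, ⟨lift_lt_omega1.{u, v}.1 hα, ?_⟩, hbC⟩
    ext x
    constructor
    · rintro ⟨hxX, hxb⟩
      have : L x ∈ (L '' X) ∩ Set.Iio (L b) := ⟨⟨x, hxX, rfl⟩, Ordinal.lift_lt.2 hxb⟩
      rw [hXα] at this
      exact this
    · intro hx
      have : L x ∈ (L '' X) ∩ Set.Iio (L b) := by rw [hXα]; exact hx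
      obtain ⟨⟨y, hyX, hy⟩, hlt⟩ := this
      have : y = x := Ordinal.lift_inj.1 hy
      subst this
      exact ⟨hyX, Ordinal.lift_lt.1 hlt⟩

lemma sSup_range_lt_omega1 (f : ℕ → Ordinal.{u}) (h : ∀ n, f n < omega1) :
    sSup (Set.range f) < omega1 := by
  have hc : Cardinal.mk (ULift.{u} ℕ) < ((Cardinal.aleph 1).ord).cof := by
    rw [Cardinal.isRegular_aleph_one.cof_eq]
    simpa using Cardinal.aleph0_lt_aleph_one
  have h2 : ⨆ i : ULift.{u} ℕ, f i.down < (Cardinal.aleph 1).ord :=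
    Ordinal.iSup_lt_ord hc (fun i => h i.down)
  have hr : Set.range f = Set.range (fun i : ULift.{u} ℕ => f i.down) := by
    ext x
    constructor
    · rintro ⟨n, hn⟩; exact ⟨⟨n⟩, hn⟩
    · rintro ⟨⟨n⟩, hn⟩; exact ⟨n, hn⟩
  rw [omega1, hr]; exact h2

/-- The limit members of a club form a club. -/
lemma isClub_inter_limits (C : Set Ordinal.{u}) (hC : IsClub' C) :
    IsClub' {a | a ∈ C ∧ Order.IsSuccLimit a} := by
  obtain ⟨hsub, hcl, hun⟩ := hC
  refine ⟨fun a ha => hsub ha.1, ?_, ?_⟩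
  · -- closed
    intro a ha hne hsup
    have hbdd : BddAbove (C ∩ Set.Iio a) := ⟨a, fun x hx => (hx.2 : x < a).le⟩
    have hne' : (C ∩ Set.Iio a).Nonempty := by
      obtain ⟨x, hx⟩ := hne; exact ⟨x, hx.1.1, hx.2⟩
    have hsub' : {b | b ∈ C ∧ Order.IsSuccLimit b} ∩ Set.Iio a ⊆ C ∩ Set.Iio a :=
      fun x hx => ⟨hx.1.1, hx.2⟩
    have hle : sSup (C ∩ Set.Iio a) ≤ a := csSup_le hne' (fun x hx => (hx.2 : x < a).le)
    have hge : a ≤ sSup (C ∩ Set.Iio a) :=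
      le_trans (le_of_eq hsup.symm) (csSup_le_csSup hbdd hne hsub')
    have haC : a ∈ C := hcl a ha hne' (le_antisymm hle hge)
    refine ⟨haC, Ordinal.isSuccLimit_iff.2 ⟨?_, Order.isSuccPrelimit_of_succ_lt ?_⟩⟩
    · rintro rfl
      obtain ⟨x, hx⟩ := hne
      exact absurd hx.2 (by simp)
    · intro b hb
      have hb' : b < sSup ({b | b ∈ C ∧ Order.IsSuccLimit b} ∩ Set.Iio a) := by rw [hsup]; exact hb
      obtain ⟨x, hx, hbx⟩ := exists_lt_of_lt_csSup hne hb'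
      exact lt_trans (hx.1.2.succ_lt hbx) hx.2
  · -- unbounded
    intro a ha
    classical
    set F : Ordinal → Ordinal := fun x => if h : x < omega1 then (hun x h).choose else 0 with hF
    have hFspec : ∀ x, x < omega1 → F x ∈ C ∧ x < F x ∧ F x < omega1 := by
      intro x hx
      have h1 := (hun x hx).choose_spec
      have : F x = (hun x hx).choose := by simp [hF, hx]
      rw [this]
      exact ⟨h1.1, h1.2, hsub h1.1⟩
    set g : ℕ → Ordinal := fun n => Nat.rec (F a) (fun _ ih => F ih) n with hg
    have hgs : ∀ n, g (n + 1) = F (g n) := fun n => rfl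
    have hgood : ∀ n, g n ∈ C ∧ g n < omega1 := by
      intro n
      induction n with
      | zero => exact ⟨(hFspec a ha).1, (hFspec a ha).2.2⟩
      | succ n ih =>
        rw [hgs]
        exact ⟨(hFspec (g n) ih.2).1, (hFspec (g n) ih.2).2.2⟩
    have hmono : ∀ n, g n < g (n + 1) := by
      intro n; rw [hgs]; exact (hFspec (g n) (hgood n).2).2.1
    set s := sSup (Set.range g) with hs
    have hslt : s < omega1 := sSup_range_lt_omega1 g (fun n => (hgood n).2)
    have hbddr : BddAbove (Set.range g) := ⟨omega1, by rintro x ⟨n, rfl⟩; exact (hgood n).2.le⟩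
    have hgles : ∀ n, g n ≤ s := fun n => le_csSup hbddr ⟨n, rfl⟩
    have hglts : ∀ n, g n < s := fun n => lt_of_lt_of_le (hmono n) (hgles (n + 1))
    have hrne : (Set.range g).Nonempty := ⟨g 0, 0, rfl⟩
    have hne2 : (C ∩ Set.Iio s).Nonempty := ⟨g 0, (hgood 0).1, hglts 0⟩
    have hbdds : BddAbove (C ∩ Set.Iio s) := ⟨s, fun x hx => (hx.2 : x < s).le⟩
    have hsupeq : sSup (C ∩ Set.Iio s) = s := by
      apply le_antisymm (csSup_le hne2 (fun x hx => (hx.2 : x < s).le))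
      rw [hs]
      apply csSup_le hrne
      rintro x ⟨n, rfl⟩
      exact le_csSup hbdds ⟨(hgood n).1, hglts n⟩
    have hsC : s ∈ C := hcl s hslt hne2 hsupeq
    have hslim : Order.IsSuccLimit s := by
      rw [Ordinal.isSuccLimit_iff, Order.isSuccPrelimit_iff_succ_lt]
      constructor
      · intro h0
        exact absurd (hglts 0) (by rw [h0]; simp)
      · intro b hb
        obtain ⟨x, ⟨n, rfl⟩, hbx⟩ := exists_lt_of_lt_csSup hrne (hs ▸ hb)
        exact lt_of_le_of_lt (Order.succ_le_of_lt hbx) (hglts n)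
    refine ⟨s, ⟨hsC, hslim⟩, lt_of_lt_of_le (hFspec a ha).2.1 (hgles 0)⟩

/-- A stationary set meets every club in a limit ordinal. -/
lemma stationary_meets_club_limit {S C : Set Ordinal.{u}} (hS : IsStationary' S) (hC : IsClub' C) :
    ∃ α, α ∈ S ∧ α ∈ C ∧ Order.IsSuccLimit α := by
  obtain ⟨α, hα⟩ := hS.2 _ (isClub_inter_limits C hC)
  exact ⟨α, hα.1, hα.2.1, hα.2.2⟩

/-- The core argument, in a single universe. -/
lemma stmt15_core (hd : DiamondOn.{u} (Set.Iio omega1)) :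
    ∃ S : Set Ordinal.{u}, IsStationary' S ∧ IsStationary' (Set.Iio omega1 \ S) ∧
      DiamondOn S := by
  obtain ⟨A, hA, hG⟩ := hd
  set Gu : Set Ordinal := {α | α ∈ Set.Iio omega1 ∧ Set.univ ∩ Set.Iio α = A α} with hGu
  set S : Set Ordinal := Set.Iio omega1 \ Gu with hSdef
  have hGuA : ∀ α, α ∈ Gu → A α = Set.Iio α := by
    intro α hα
    rw [← hα.2, Set.univ_inter]
  refine ⟨S, ⟨Set.diff_subset, ?_⟩, ⟨Set.diff_subset, ?_⟩, ?_⟩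
  · -- S is stationary
    intro C hC
    obtain ⟨α, hαG, hαC, hαlim⟩ := stationary_meets_club_limit (hG ∅) hC
    refine ⟨α, ⟨hαG.1, ?_⟩, hαC⟩
    intro hαGu
    have h1 : A α = Set.Iio α := hGuA α hαGu
    have h2 : A α = ∅ := by rw [← hαG.2, Set.empty_inter]
    rw [h1] at h2
    have : (0 : Ordinal) ∈ Set.Iio α := hαlim.pos
    rw [h2] at this
    exact this
  · -- complement is stationary
    intro C hC
    obtain ⟨α, hαG, hαC⟩ := (hG Set.univ).2 C hC
    exact ⟨α, ⟨hαG.1, fun h => h.2 hαG⟩, hαC⟩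
  · -- Diamond on S
    refine ⟨fun α => {β | β + 1 ∈ A α}, ?_, ?_⟩
    · intro α hα β hβ
      have h1 : β + 1 ∈ Set.Iio α := hA α hα.1 hβ
      exact lt_trans (ord_lt_add_one β) h1
    · intro X
      refine ⟨fun α hα => hα.1.1, ?_⟩
      intro C hC
      set Y : Set Ordinal := (fun x => x + 1) '' X with hY
      obtain ⟨α, hαG, hαC, hαlim⟩ := stationary_meets_club_limit (hG Y) hC
      have h0Y : (0 : Ordinal) ∉ Y := by
        rintro ⟨x, _, hx⟩
        exact ord_add_one_ne_zero x hx
      refine ⟨α, ⟨⟨hαG.1, ?_⟩, ?_⟩, hαC⟩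
      · -- α ∉ Gu
        intro hαGu
        have h1 : A α = Set.Iio α := hGuA α hαGu
        have h2 : (0 : Ordinal) ∈ A α := by rw [h1]; exact hαlim.pos
        rw [← hαG.2] at h2
        exact h0Y h2.1
      · -- X ∩ Iio α = B α
        ext β
        simp only [Set.mem_inter_iff, Set.mem_Iio, Set.mem_setOf_eq]
        rw [← hαG.2]
        constructor
        · rintro ⟨hβX, hβα⟩
          exact ⟨⟨β, hβX, rfl⟩, ord_add_one_lt_limit hαlim hβα⟩
        · rintro ⟨⟨x, hxX, hx⟩, hβα⟩
          obtain rfl : x = β := ord_add_one_inj hx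
          exact ⟨hxX, lt_trans (ord_lt_add_one x) hβα⟩

theorem stmt15 (hd : DiamondOn (Set.Iio omega1)) :
    ∃ S : Set Ordinal, IsStationary' S ∧ IsStationary' (Set.Iio omega1 \ S) ∧
      DiamondOn S := by
  exact stmt15_core.{u_2} (diamondOn_down.{u_2, u_1} (diamondOn_up.{u_1, u_2} hd))
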